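/- Let V = F_p^n and let G ≤ Aff(V) be insoluble, satisfy Hypothesis (*), and be such that V is an irreducible F_p[G]-module for the linear action. Then G has no non-trivial soluble subnormal subgroup. -/

import Mathlib

/-- The vector space `𝔽_p^n`. -/
abbrev V (p n : ℕ) : Type := Fin n → ZMod p

/-- The affine group `Aff(V) = V ⋊ GL(V)` of `V = 𝔽_p^n`, realised as the group of
affine self-equivalences of `V`; the pair `(v, A)` corresponds to `w ↦ A w + v` and
acts on `V` by evaluation. -/
abbrev Aff (p n : ℕ) : Type := V p n ≃ᵃ[ZMod p] V p n

/-- The stabiliser of the point `v` in a subgroup `G ≤ Aff(V)`. -/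
def affStab {p n : ℕ} (G : Subgroup (Aff p n)) (v : V p n) : Subgroup (Aff p n) where
  carrier := {g | g ∈ G ∧ g v = v}
  one_mem' := ⟨G.one_mem, rfl⟩
  mul_mem' := by
    rintro a b ⟨haG, hav⟩ ⟨hbG, hbv⟩
    refine ⟨G.mul_mem haG hbG, ?_⟩
    show a (b v) = v
    rw [hbv, hav]
  inv_mem' := by
    rintro a ⟨haG, hav⟩
    refine ⟨G.inv_mem haG, ?_⟩
    have h1 : (a⁻¹ * a) v = a⁻¹ (a v) := rfl
    rw [inv_mul_cancel] at h1
    rw [hav] at h1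
    exact h1.symm

/-- Hypothesis (*): for each `v ∈ V`, the stabiliser of `v` in `G` is a soluble
subgroup of `p`-power index in `G`. -/
def HypStar (p n : ℕ) (G : Subgroup (Aff p n)) : Prop :=
  ∀ v : V p n, IsSolvable (affStab G v) ∧ ∃ s : ℕ, (affStab G v).relIndex G = p ^ s

/-- A subgroup `H` of a group `Γ` is subnormal if there is a chain
`H = H₀ ◁ H₁ ◁ ⋯ ◁ H_k = Γ`. -/
def IsSubnormalIn {Γ : Type*} [Group Γ] (H : Subgroup Γ) : Prop :=
  ∃ (k : ℕ) (c : Fin (k + 1) → Subgroup Γ),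
    c 0 = H ∧ c (Fin.last k) = ⊤ ∧
    ∀ i : Fin k, c i.castSucc ≤ c i.succ ∧ ((c i.castSucc).subgroupOf (c i.succ)).Normal

/-!
A soluble subnormal subgroup is first reduced to a soluble normal one: in a finite group, if `K`
has trivial soluble radical and `L ⊴ K`, then so does `L`, because the `K`-conjugates of a soluble
normal subgroup of `L` generate a soluble subgroup of `L` normalised by `K`.

So let `N ≠ 1` be a soluble normal subgroup of `G`; it contains an abelian normal subgroup
`A ≠ 1`. The translations in `G` form an abelian normal subgroup `T` whose translation vectors
make up a `G`-invariant subspace; if `T ≠ 1` this is all of `V`, and then `G = T · G₀` is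
soluble. Hence `T = 1`. The elements of `A` of order dividing `p` form a normal `p`-subgroup, whose
fixed vectors form a nonzero `G`-invariant subspace, hence all of `V`; so this subgroup lies in
`T = 1`, and `|A|` is prime to `p`. Then `A` lies in every point stabiliser, since these have
`p`-power index, so `A` acts trivially on `V` and `A = 1`.
-/

open Subgroup

namespace Subgroup

variable {Γ : Type*} [Group Γ]

theorem isSolvable_sup_of_le_normalizer {H N : Subgroup Γ} [Group.IsSolvable H]
    [Group.IsSolvable N] (hle : H ≤ normalizer (N : Set Γ)) : Group.IsSolvable ↥(H ⊔ N) := by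
  have := normal_subgroupOf_of_le_normalizer hle
  have := normal_subgroupOf_sup_of_le_normalizer hle
  rw [Group.isSolvable_iff_subgroup_quotient (N.subgroupOf (H ⊔ N))]
  exact ⟨Group.isSolvable_of_surjective
      (f := (subgroupOfEquivOfLe le_sup_right).symm.toMonoidHom) (MulEquiv.surjective _),
    Group.isSolvable_of_surjective
      (f := (QuotientGroup.quotientInfEquivProdNormalizerQuotient H N hle).toMonoidHom)
      (MulEquiv.surjective _)⟩

theorem isSolvable_iSup_of_le_normalizer {ι : Type*} [Finite ι] {K : Subgroup Γ}
    {S : ι → Subgroup Γ} (hle : ∀ i, S i ≤ K) (hK : ∀ i, K ≤ normalizer (S i : Set Γ))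
    (hS : ∀ i, Group.IsSolvable (S i)) : Group.IsSolvable ↥(⨆ i, S i) := by
  have := Fintype.ofFinite ι
  rw [← Finset.sup_univ_eq_iSup]
  refine (Finset.sup_induction
    (p := fun X : Subgroup Γ => Group.IsSolvable X ∧ X ≤ K ∧ K ≤ normalizer (X : Set Γ))
    ⟨inferInstance, bot_le, le_normalizer_of_normal⟩ ?_ fun i _ => ⟨hS i, hle i, hK i⟩).1
  rintro X ⟨hX, hXK, hKX⟩ Y ⟨hY, hYK, hKY⟩
  refine ⟨?_, sup_le hXK hYK,
    (le_inf hKX hKY).trans (normalizer_inf_normalizer_le_normalizer_sup X Y)⟩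
  rw [sup_comm]
  exact isSolvable_sup_of_le_normalizer (hYK.trans hKX)

/-- Subgroups of `K` are taken as subgroups of `Γ`, so that the notion can be passed down a
subnormal chain in `Γ`. -/
def HasTrivialSolvableRadical (K : Subgroup Γ) : Prop :=
  ∀ M ≤ K, K ≤ normalizer (M : Set Γ) → Group.IsSolvable M → M = ⊥

open scoped Pointwise in
theorem HasTrivialSolvableRadical.of_le_normalizer [Finite Γ] {K L : Subgroup Γ}
    (hK : K.HasTrivialSolvableRadical) (hLK : L ≤ K) (hKL : K ≤ normalizer (L : Set Γ)) :
    L.HasTrivialSolvableRadical := by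
  intro M hML hLM hM
  set conj : K → Subgroup Γ := fun k => ConjAct.toConjAct (k : Γ) • M
  have hconj_le (k : K) : conj k ≤ L := by
    rw [← conjAct_pointwise_smul_eq_self (hKL k.2)]
    exact pointwise_smul_le_pointwise_smul_iff.mpr hML
  have hL_conj (k : K) : L ≤ normalizer (conj k : Set Γ) := fun l hl => by
    have hl' : (k : Γ)⁻¹ * l * k ∈ L := (mem_normalizer_iff''.mp (hKL k.2) l).mp hl
    rw [← conjAct_pointwise_smul_iff, smul_smul, ← map_mul,
      show l * k = k * ((k : Γ)⁻¹ * l * k) by group, map_mul, mul_smul,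
      conjAct_pointwise_smul_eq_self (hLM hl')]
  have hK_sup : K ≤ normalizer ((⨆ k, conj k : Subgroup Γ) : Set Γ) := by
    refine le_normalizer_iff.mpr fun g hg x hx => ?_
    refine iSup_induction conj (C := fun x => g * x * g⁻¹ ∈ ⨆ k, conj k) hx
      (fun k y hy => mem_iSup_of_mem (⟨g, hg⟩ * k) ?_) (by simp) fun x y hx hy => ?_
    · rw [← ConjAct.toConjAct_smul]
      simp only [conj, coe_mul, map_mul, mul_smul]
      exact smul_mem_pointwise_smul _ _ _ hy
    · simpa [mul_assoc] using mul_mem hx hy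
  have hbot := hK (⨆ k, conj k) ((iSup_le hconj_le).trans hLK) hK_sup
    (isSolvable_iSup_of_le_normalizer hconj_le hL_conj fun k =>
      Group.isSolvable_of_surjective (f := (equivSMul _ M).toMonoidHom) (MulEquiv.surjective _))
  refine le_bot_iff.mp (le_of_le_of_eq ?_ hbot)
  refine le_of_eq_of_le ?_ (le_iSup conj 1)
  simp [conj]

theorem IsSubnormal.eq_bot_of_isSolvable [Finite Γ]
    (hΓ : (⊤ : Subgroup Γ).HasTrivialSolvableRadical) {H : Subgroup Γ} (hH : H.IsSubnormal)
    (hsol : Group.IsSolvable H) : H = ⊥ := by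
  suffices H.HasTrivialSolvableRadical from this H le_rfl le_normalizer hsol
  clear hsol
  induction hH with
  | top => exact hΓ
  | step H K hHK _ hN ih =>
    exact ih.of_le_normalizer hHK ((normal_subgroupOf_iff_le_normalizer hHK).mp hN)

theorem exists_normal_isMulCommutative_ne_bot {N : Subgroup Γ} [N.Normal]
    [Group.IsSolvable N] (hN : N ≠ ⊥) :
    ∃ A : Subgroup Γ, A.Normal ∧ IsMulCommutative A ∧ A ≠ ⊥ := by
  set D : ℕ → Subgroup Γ := fun k => (derivedSeries N k).map N.subtype
  have hD_succ (k : ℕ) : D (k + 1) = ⁅D k, D k⁆ := by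
    simp only [D, derivedSeries_succ, map_commutator]
  have hD_normal (k : ℕ) : (D k).Normal := by
    induction k with
    | zero => simpa [D, derivedSeries_zero, ← MonoidHom.range_eq_map] using ‹N.Normal›
    | succ k ih => rw [hD_succ]; infer_instance
  by_contra! h
  have hD_ne (k : ℕ) : D k ≠ ⊥ := by
    induction k with
    | zero => simpa [D, derivedSeries_zero, ← MonoidHom.range_eq_map] using hN
    | succ k ih =>
      rw [hD_succ]
      exact fun hk => ih (h _ (hD_normal k) (commutator_self_eq_bot_iff.mp hk))
  obtain ⟨m, hm⟩ := Group.IsSolvable.solvable (G := N)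
  exact hD_ne m (by simp [D, hm])

theorem relIndex_dvd_index_of_normal_right [Finite Γ] (A H : Subgroup Γ) [A.Normal] :
    H.relIndex A ∣ H.index := by
  obtain ⟨t, ht⟩ := relIndex_dvd_index_of_normal A H
  have e1 := relIndex_inf_mul_relIndex A H ⊤
  have e2 := relIndex_mul_index (inf_le_left : A ⊓ H ≤ A)
  rw [inf_top_eq, relIndex_top_right, relIndex_top_right] at e1
  rw [inf_relIndex_left, ht] at e2
  have hpos : 0 < A.relIndex H := Nat.pos_of_ne_zero index_ne_zero_of_finite
  exact ⟨t, Nat.eq_of_mul_eq_mul_left hpos (by rw [e1, ← e2]; ring)⟩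

theorem le_of_coprime_card_index [Finite Γ] {A H : Subgroup Γ} [A.Normal]
    (h : (Nat.card A).Coprime H.index) : A ≤ H :=
  relIndex_eq_one.mp <| Nat.eq_one_of_dvd_coprimes h (relIndex_dvd_card H A)
    (relIndex_dvd_index_of_normal_right A H)

def torsionBy (A : Subgroup Γ) [IsMulCommutative A] (m : ℕ) : Subgroup Γ where
  carrier := {g | g ∈ A ∧ g ^ m = 1}
  one_mem' := ⟨A.one_mem, one_pow m⟩
  mul_mem' := fun {a b} ⟨ha, ha'⟩ ⟨hb, hb'⟩ =>
    ⟨A.mul_mem ha hb, by rw [Commute.mul_pow (setLike_mul_comm ha hb), ha', hb', one_mul]⟩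
  inv_mem' := fun {a} ⟨ha, ha'⟩ => ⟨A.inv_mem ha, by rw [inv_pow, ha', inv_one]⟩

section torsionBy

variable (A : Subgroup Γ) [IsMulCommutative A]

instance torsionBy_normal [A.Normal] (m : ℕ) : (A.torsionBy m).Normal :=
  ⟨fun g ⟨hgA, hg⟩ x => ⟨‹A.Normal›.conj_mem g hgA x, by simp [conj_pow, hg]⟩⟩

theorem isPGroup_torsionBy (p : ℕ) : IsPGroup p (A.torsionBy p) :=
  fun g => ⟨1, Subtype.ext (by simpa using g.2.2)⟩

theorem torsionBy_ne_bot [Finite A] {p : ℕ} [Fact p.Prime] (hp : p ∣ Nat.card A) :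
    A.torsionBy p ≠ ⊥ := by
  obtain ⟨a, ha⟩ := exists_prime_orderOf_dvd_card' (G := A) p hp
  have ha_mem : (a : Γ) ∈ A.torsionBy p :=
    ⟨a.2, by rw [← ha, ← coe_pow, pow_orderOf_eq_one, OneMemClass.coe_one]⟩
  intro h
  have ha_one : a = 1 := Subtype.ext ((eq_bot_iff_forall _).mp h a ha_mem)
  exact (Fact.out : p.Prime).one_lt.ne' (by rw [← ha, ha_one, orderOf_one])

end torsionBy

end Subgroup

theorem IsSubnormalIn.isSubnormal {Γ : Type*} [Group Γ] {H : Subgroup Γ} (hH : IsSubnormalIn H) :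
    H.IsSubnormal := by
  obtain ⟨k, c, rfl, hlast, hc⟩ := hH
  exact Fin.reverseInduction (motive := fun i => (c i).IsSubnormal) (hlast ▸ IsSubnormal.top)
    (fun i ih => IsSubnormal.step _ _ (hc i).1 ih (hc i).2) 0

theorem AffineEquiv.apply_eq_linear_add {k W : Type*} [Ring k] [AddCommGroup W] [Module k W]
    (f : W ≃ᵃ[k] W) (w : W) : f w = f.linear w + f 0 :=
  congrFun (AffineMap.decomp f.toAffineMap) w

instance (p n : ℕ) [NeZero p] : Finite (Aff p n) :=
  Finite.of_injective _ DFunLike.coe_injective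

variable {p n : ℕ}

def linearPart (G : Subgroup (Aff p n)) : G →* (V p n ≃ₗ[ZMod p] V p n) :=
  AffineEquiv.linearHom.comp G.subtype

@[simp]
theorem linearPart_apply {G : Subgroup (Aff p n)} (g : G) :
    linearPart G g = (g : Aff p n).linear :=
  rfl

def IsInvariantSubspace (G : Subgroup (Aff p n)) (W : Submodule (ZMod p) (V p n)) : Prop :=
  ∀ g ∈ G, ∀ w ∈ W, g.linear w ∈ W

def IsIrreducibleLinearAction (G : Subgroup (Aff p n)) : Prop :=
  ∀ W : Submodule (ZMod p) (V p n), IsInvariantSubspace G W → W = ⊥ ∨ W = ⊤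

theorem affStab_le (G : Subgroup (Aff p n)) (v : V p n) : affStab G v ≤ G :=
  fun _ hg => hg.1

theorem eq_bot_of_le_affStab {G : Subgroup (Aff p n)} {A : Subgroup G}
    (h : ∀ v, A ≤ (affStab G v).subgroupOf G) : A = ⊥ :=
  (eq_bot_iff_forall A).mpr fun _ ha => Subtype.ext <| AffineEquiv.ext fun v => (h v ha).2

section Translations

variable {G : Subgroup (Aff p n)}

theorem apply_eq_add_of_mem_ker {t : G} (ht : t ∈ (linearPart G).ker) (v : V p n) :
    (t : Aff p n) v = v + (t : Aff p n) 0 := by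
  rw [AffineEquiv.apply_eq_linear_add, ← linearPart_apply, MonoidHom.mem_ker.mp ht]
  rfl

instance : Group.IsSolvable (linearPart G).ker :=
  Group.isSolvable_of_comm fun s t => Subtype.ext <| Subtype.ext <| AffineEquiv.ext fun v => by
    change (s : Aff p n) ((t : Aff p n) v) = (t : Aff p n) ((s : Aff p n) v)
    rw [apply_eq_add_of_mem_ker s.2 ((t : Aff p n) v), apply_eq_add_of_mem_ker t.2 v,
      apply_eq_add_of_mem_ker t.2 ((s : Aff p n) v), apply_eq_add_of_mem_ker s.2 v,
      add_right_comm]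

variable (G) in
def translationSubspace : Submodule (ZMod p) (V p n) :=
  AddSubgroup.toZModSubmodule p
    { carrier := {w | ∃ t ∈ (linearPart G).ker, (t : Aff p n) 0 = w}
      zero_mem' := ⟨1, one_mem _, rfl⟩
      add_mem' := by
        rintro _ _ ⟨s, hs, rfl⟩ ⟨t, ht, rfl⟩
        refine ⟨s * t, mul_mem hs ht, ?_⟩
        change (s : Aff p n) ((t : Aff p n) 0) = _
        rw [apply_eq_add_of_mem_ker hs, add_comm]
      neg_mem' := by
        rintro _ ⟨t, ht, rfl⟩
        refine ⟨t⁻¹, inv_mem ht, eq_neg_of_add_eq_zero_left ?_⟩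
        rw [← apply_eq_add_of_mem_ker ht]
        exact (t : Aff p n).apply_symm_apply 0 }

theorem mem_translationSubspace {w : V p n} :
    w ∈ translationSubspace G ↔ ∃ t ∈ (linearPart G).ker, (t : Aff p n) 0 = w :=
  Iff.rfl

theorem isInvariantSubspace_translationSubspace :
    IsInvariantSubspace G (translationSubspace G) := by
  intro g hg w hw
  obtain ⟨t, ht, rfl⟩ := mem_translationSubspace.mp hw
  let g' : G := ⟨g, hg⟩
  have hconj : g' * t * g'⁻¹ ∈ (linearPart G).ker := (linearPart G).normal_ker.conj_mem t ht g'
  refine mem_translationSubspace.mpr ⟨_, hconj, ?_⟩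
  change g ((t : Aff p n) (g.symm 0)) = _
  rw [apply_eq_add_of_mem_ker ht, add_comm, ← vadd_eq_add, AffineEquiv.map_vadd, vadd_eq_add,
    AffineEquiv.apply_symm_apply, add_zero]

theorem translationSubspace_ne_bot (h : (linearPart G).ker ≠ ⊥) : translationSubspace G ≠ ⊥ := by
  obtain ⟨⟨t, ht⟩, ht1⟩ := (Subgroup.ne_bot_iff_exists_ne_one).mp h
  intro hbot
  have ht0 : (t : Aff p n) 0 = 0 := by
    rw [← Submodule.mem_bot (ZMod p), ← hbot]
    exact ⟨t, ht, rfl⟩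
  refine ht1 (Subtype.ext (Subtype.ext (AffineEquiv.ext fun v => ?_)))
  rw [apply_eq_add_of_mem_ker ht, ht0, add_zero]
  rfl

theorem isSolvable_of_translationSubspace_eq_top (hst : Group.IsSolvable (affStab G 0))
    (h : translationSubspace G = ⊤) : Group.IsSolvable G := by
  set S := (affStab G 0).subgroupOf G
  have : Group.IsSolvable S := Group.isSolvable_of_surjective
    (f := (subgroupOfEquivOfLe (affStab_le G 0)).symm.toMonoidHom) (MulEquiv.surjective _)
  have hsup : S ⊔ (linearPart G).ker = ⊤ := by
    refine eq_top_iff.mpr fun x _ => ?_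
    obtain ⟨t, ht, htx⟩ := mem_translationSubspace.mp (h ▸ Submodule.mem_top :
      (x : Aff p n) 0 ∈ translationSubspace G)
    have hs : t⁻¹ * x ∈ S := ⟨(t⁻¹ * x).2, by
      change (t : Aff p n).symm ((x : Aff p n) 0) = 0
      rw [← htx, AffineEquiv.symm_apply_apply]⟩
    rw [sup_comm]
    simpa using mul_mem_sup ht hs
  have := isSolvable_sup_of_le_normalizer (H := S) (N := (linearPart G).ker)
    le_normalizer_of_normal
  rw [hsup] at this
  exact Group.isSolvable_of_surjective (f := topEquiv.toMonoidHom) (MulEquiv.surjective _)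

theorem ker_linearPart_eq_bot (hirr : IsIrreducibleLinearAction G)
    (hst : Group.IsSolvable (affStab G 0)) (hG : ¬ Group.IsSolvable G) :
    (linearPart G).ker = ⊥ := by
  by_contra h
  exact hG <| isSolvable_of_translationSubspace_eq_top hst <|
    (hirr _ isInvariantSubspace_translationSubspace).resolve_left (translationSubspace_ne_bot h)

end Translations

section FixedSubspace

variable {G : Subgroup (Aff p n)}

def fixedSubspace (B : Subgroup G) : Submodule (ZMod p) (V p n) where
  carrier := {w | ∀ b ∈ B, linearPart G b w = w}
  zero_mem' _ _ := map_zero _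
  add_mem' {v w} hv hw b hb := by rw [map_add, hv b hb, hw b hb]
  smul_mem' c w hw b hb := by rw [map_smul, hw b hb]

theorem isInvariantSubspace_fixedSubspace (B : Subgroup G) [B.Normal] :
    IsInvariantSubspace G (fixedSubspace B) := by
  intro g hg w hw b hb
  let g' : G := ⟨g, hg⟩
  have hconj : g'⁻¹ * b * g' ∈ B := by simpa using ‹B.Normal›.conj_mem b hb g'⁻¹
  have key := congrArg (fun x => linearPart G x w) (show b * g' = g' * (g'⁻¹ * b * g') by group)
  rw [map_mul, map_mul (linearPart G) g', LinearEquiv.mul_apply, LinearEquiv.mul_apply,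
    hw _ hconj] at key
  exact key

theorem fixedSubspace_ne_bot [Fact p.Prime] (hn : n ≠ 0) {B : Subgroup G} (hB : IsPGroup p B) :
    fixedSubspace B ≠ ⊥ := by
  let : MulAction B (V p n) := MulAction.compHom _ ((linearPart G).comp B.subtype)
  have hcard : p ∣ Nat.card (V p n) := by
    rw [Nat.card_fun, Nat.card_zmod, Nat.card_fin]
    exact dvd_pow_self p hn
  obtain ⟨w, hw, hw0⟩ := hB.exists_fixed_point_of_prime_dvd_card_of_fixed_point (V p n) hcard
    (a := 0) fun b => map_zero (linearPart G b)
  intro hbot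
  have hwB : w ∈ fixedSubspace B := fun b hb => hw ⟨b, hb⟩
  rw [hbot, Submodule.mem_bot] at hwB
  exact hw0 hwB.symm

theorem le_ker_linearPart_of_isPGroup [Fact p.Prime] (hirr : IsIrreducibleLinearAction G)
    {B : Subgroup G} [B.Normal] (hB : IsPGroup p B) : B ≤ (linearPart G).ker := by
  have htop : fixedSubspace B = ⊤ := by
    rcases eq_or_ne n 0 with rfl | hn
    · exact Subsingleton.elim _ _
    · exact (hirr _ (isInvariantSubspace_fixedSubspace B)).resolve_left
        (fixedSubspace_ne_bot hn hB)
  exact fun b hb => MonoidHom.mem_ker.mpr <| LinearEquiv.ext fun w =>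
    (htop ▸ Submodule.mem_top : w ∈ fixedSubspace B) b hb

end FixedSubspace

theorem hasTrivialSolvableRadical_top [Fact p.Prime] {G : Subgroup (Aff p n)}
    (hG : HypStar p n G) (hinsol : ¬ Group.IsSolvable G) (hirr : IsIrreducibleLinearAction G) :
    (⊤ : Subgroup G).HasTrivialSolvableRadical := by
  intro N _ hN _
  have : N.Normal := normalizer_eq_top_iff.mp (top_le_iff.mp hN)
  by_contra hne
  obtain ⟨A, _, _, hA_ne⟩ := exists_normal_isMulCommutative_ne_bot hne
  have hker := ker_linearPart_eq_bot hirr (hG 0).1 hinsol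
  have hpA : ¬ p ∣ Nat.card A := fun hp => A.torsionBy_ne_bot hp <| le_bot_iff.mp <|
    hker ▸ le_ker_linearPart_of_isPGroup hirr (A.isPGroup_torsionBy p)
  refine hA_ne (eq_bot_of_le_affStab fun v => le_of_coprime_card_index ?_)
  obtain ⟨s, hs⟩ := (hG v).2
  rw [show ((affStab G v).subgroupOf G).index = p ^ s from hs]
  exact (((Fact.out : p.Prime).coprime_iff_not_dvd.mpr hpA).pow_left s).symm

/-- Corollary 6.5: let `G ≤ Aff(V)` be insoluble, satisfy Hypothesis (*), and be such
that `V` is an irreducible `𝔽_p[G]`-module for the linear action.  Then `G` has no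
non-trivial soluble subnormal subgroup. -/
theorem stmt_16 (p n : ℕ) (hp : p.Prime) (G : Subgroup (Aff p n))
    (hG : HypStar p n G) (hinsol : ¬ IsSolvable G)
    (hirr : ∀ W : Submodule (ZMod p) (V p n),
      (∀ g ∈ G, ∀ w ∈ W, g.linear w ∈ W) → W = ⊥ ∨ W = ⊤) :
    ∀ H : Subgroup G, IsSubnormalIn H → IsSolvable H → H = ⊥ := by
  intro H hH hsol
  have := Fact.mk hp
  exact hH.isSubnormal.eq_bot_of_isSolvable (hasTrivialSolvableRadical_top hG hinsol hirr) hsol
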